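/- Let S be a finite set of primes, let (r_k)_{k≥1} be a periodic sequence of positive real numbers, and for each p ∈ S let (s_{p,k})_{k≥1} and (t_{p,k})_{k≥1} be periodic sequences of nonnegative real numbers whose periods are coprime to p. Define b̃_k := r_k · ∏_{p ∈ S} |k|_p^{s_{p,k}} · p^{−t_{p,k}·|k|_p^{−1}}. Then for every Θ ∈ ℝ, the Cesàro mean L(Θ) := 𝒞(b̃_k e^{ikΘ}) = lim_{X→∞} (1/X) Σ_{k ≤ X} b̃_k e^{ikΘ} exists (as a complex number); moreover L(Θ) = 0 unless Θ ∈ 2πℚ. -/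

import Mathlib

open Filter Topology Real

noncomputable section

open Finset Function

/-!
Fix `V` and set the `p`-factor of `b̃_k` to zero whenever `p ^ V ∣ k`. As `v_p(k + M) = v_p(k)`
once `p ^ V ∤ k` and `p ^ V ∣ M`, the truncated sequence `c_k` is periodic modulo
`M = ϖr · ∏_p ϖs(p) ϖt(p) p ^ V`. With `w = e^{iΘ}`, the partial sums `U_X` of `c_k w ^ k` satisfy
`U_{X+M} = U_M + w ^ M U_X`, so up to a bounded error they are `X U_M / M` if `w ^ M = 1` and
constant otherwise: the Cesàro mean of `c_k w ^ k` exists, and vanishes unless `w ^ M = 1`, which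
forces `Θ ∈ 2πℚ`. The truncation changes at most a proportion `#S / 2 ^ V` of the terms, each by
at most `sup |r|`, so the Cesàro averages of `b̃_k w ^ k` are uniform limits, as `V → ∞`, of
convergent sequences.
-/

theorem exists_tendsto_of_forall_dist_le {α β : Type*} [PseudoMetricSpace α] [CompleteSpace α]
    {l : Filter β} [l.NeBot] {f : β → α} {g : ℕ → β → α} {ℓ : ℕ → α} {δ : ℕ → ℝ}
    (hg : ∀ V, Tendsto (g V) l (𝓝 (ℓ V))) (hδ : Tendsto δ atTop (𝓝 0))
    (hfg : ∀ V x, dist (f x) (g V x) ≤ δ V) :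
    ∃ L, Tendsto f l (𝓝 L) ∧ Tendsto ℓ atTop (𝓝 L) := by
  have hℓ : ∀ V W, dist (ℓ V) (ℓ W) ≤ δ V + δ W := fun V W =>
    le_of_tendsto ((hg V).dist (hg W)) <| Eventually.of_forall fun x =>
      (dist_triangle_left _ _ (f x)).trans (add_le_add (hfg V x) (hfg W x))
  have hcauchy : CauchySeq ℓ := Metric.cauchySeq_iff'.2 fun ε hε => by
    obtain ⟨N, hN⟩ := eventually_atTop.1 (hδ.eventually (gt_mem_nhds (half_pos hε)))
    exact ⟨N, fun V hV => (hℓ V N).trans_lt (by linarith [hN V hV, hN N le_rfl])⟩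
  obtain ⟨L, hL⟩ := cauchySeq_tendsto_of_complete hcauchy
  have hunif : TendstoUniformly g f atTop := Metric.tendstoUniformly_iff.2 fun ε hε =>
    (hδ.eventually (gt_mem_nhds hε)).mono fun V hV x => (hfg V x).trans_lt hV
  exact ⟨L, hunif.tendsto_of_eventually_tendsto (Eventually.of_forall hg) hL, hL⟩

theorem norm_le_sum_range_of_periodic {E : Type*} [SeminormedAddGroup E] {φ : ℕ → E} {M : ℕ}
    (hM : M ≠ 0) (h : Periodic (fun n => ‖φ n‖) M) (n : ℕ) :
    ‖φ n‖ ≤ ∑ j ∈ range M, ‖φ j‖ := by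
  rw [← h.map_mod_nat n]
  exact single_le_sum (fun j _ => norm_nonneg (φ j)) (mem_range.2 (Nat.mod_lt n (by omega)))

theorem tendsto_div_natCast_of_norm_le {𝕜 : Type*} [RCLike 𝕜] {φ : ℕ → 𝕜} {C : ℝ}
    (h : ∀ n, ‖φ n‖ ≤ C) : Tendsto (fun n : ℕ => φ n / n) atTop (𝓝 0) :=
  squeeze_zero_norm (fun n => by rw [norm_div, RCLike.norm_natCast]; gcongr; exact h n)
    (tendsto_const_div_atTop_nhds_zero_nat C)

theorem sum_Icc_one_eq_sum_range {M : Type*} [AddCommMonoid M] (u : ℕ → M) (X : ℕ) :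
    ∑ k ∈ Icc 1 X, u k = ∑ k ∈ range X, u (k + 1) := by
  rw [range_eq_Ico, sum_Ico_add', zero_add, Ico_add_one_right_eq_Icc]

theorem exists_tendsto_avg_of_add_eq_mul {𝕜 : Type*} [RCLike 𝕜] {u : ℕ → 𝕜} {M : ℕ}
    (hM : M ≠ 0) {z : 𝕜} (hz : ‖z‖ = 1) (hu : ∀ k, u (k + M) = z * u k) :
    ∃ L, Tendsto (fun X : ℕ => (∑ k ∈ range X, u k) / X) atTop (𝓝 L) ∧ (z ≠ 1 → L = 0) := by
  set U : ℕ → 𝕜 := fun X => ∑ k ∈ range X, u k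
  have hU : ∀ X, U (X + M) = U M + z * U X := fun X => by
    simp only [U]
    rw [add_comm X, sum_range_add, mul_sum]
    simp_rw [add_comm M, hu]
  have hM' : (M : 𝕜) ≠ 0 := Nat.cast_ne_zero.2 hM
  rcases eq_or_ne z 1 with rfl | hz1
  · refine ⟨U M / M, ?_, fun h => absurd rfl h⟩
    have hper : Periodic (fun X : ℕ => ‖U X - X * (U M / M)‖) M := fun X => by
      simp only [hU, Nat.cast_add, one_mul]
      congr 1
      field_simp
      ring
    have := (tendsto_div_natCast_of_norm_le (norm_le_sum_range_of_periodic hM hper)).add_const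
      (U M / M)
    rw [zero_add] at this
    refine this.congr' ?_
    filter_upwards [eventually_ne_atTop 0] with X hX
    field_simp
    ring
  · refine ⟨0, ?_, fun _ => rfl⟩
    set D := U M / (1 - z)
    have hD : U M = D - z * D := by
      simp only [D]; field_simp [sub_ne_zero.2 hz1.symm]
    have hper : Periodic (fun X : ℕ => ‖U X - D‖) M := fun X => by
      simp only [hU]
      rw [hD, show D - z * D + z * U X - D = z * (U X - D) by ring, norm_mul, hz, one_mul]
    have := (tendsto_div_natCast_of_norm_le (norm_le_sum_range_of_periodic hM hper)).add
      (tendsto_div_natCast_of_norm_le (φ := fun _ => D) (fun _ => le_rfl))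
    rw [add_zero] at this
    refine this.congr fun X => ?_
    rw [← add_div, sub_add_cancel]

theorem exists_tendsto_avg_mul_pow_of_periodic {𝕜 : Type*} [RCLike 𝕜] {c : ℕ → 𝕜} {M : ℕ}
    (hM : M ≠ 0) (hc : Periodic (fun k => c (k + 1)) M) {w : 𝕜} (hw : ‖w‖ = 1) :
    ∃ L, Tendsto (fun X : ℕ => (∑ k ∈ Icc 1 X, c k * w ^ k) / X) atTop (𝓝 L) ∧
      (w ^ M ≠ 1 → L = 0) := by
  simp_rw [sum_Icc_one_eq_sum_range]
  refine exists_tendsto_avg_of_add_eq_mul hM (by rw [norm_pow, hw, one_pow]) fun k => ?_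
  rw [show c (k + M + 1) = c (k + 1) from hc k]
  ring

theorem exists_rat_of_exp_mul_I_pow_eq_one {Θ : ℝ} {M : ℕ} (hM : M ≠ 0)
    (h : Complex.exp (Complex.I * Θ) ^ M = 1) : ∃ q : ℚ, Θ = 2 * π * q := by
  rw [← Complex.exp_nat_mul, Complex.exp_eq_one_iff] at h
  obtain ⟨n, hn⟩ := h
  refine ⟨n / M, ?_⟩
  have : (M : ℂ) * Θ = n * (2 * π) := by
    apply mul_left_cancel₀ Complex.I_ne_zero; linear_combination hn
  have hM' : (M : ℝ) ≠ 0 := Nat.cast_ne_zero.2 hM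
  push_cast
  field_simp
  linear_combination (exp := 1) (by exact_mod_cast this : (M : ℝ) * Θ = n * (2 * π))

theorem periodic_succ_of_dvd {α : Type*} {ρ : ℕ → α} {d M : ℕ}
    (h : ∀ k, 1 ≤ k → ρ (k + d) = ρ k) (hdM : d ∣ M) : Periodic (fun k => ρ (k + 1)) M := by
  obtain ⟨m, rfl⟩ := hdM
  have hd : Periodic (fun k => ρ (k + 1)) d := fun k => by
    simpa only [add_right_comm] using h (k + 1) k.succ_pos
  simpa only [smul_eq_mul, mul_comm] using hd.nsmul m

theorem padicValNat_add_of_not_pow_dvd {p V k M : ℕ} [Fact p.Prime] (hk : ¬ p ^ V ∣ k)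
    (hM : p ^ V ∣ M) : padicValNat p (k + M) = padicValNat p k := by
  have hk0 : k ≠ 0 := by rintro rfl; exact hk (dvd_zero _)
  have hkM0 : k + M ≠ 0 := by omega
  have hlt : padicValNat p k < V := by
    by_contra! h; exact hk ((padicValNat_dvd_iff_le hk0).2 h)
  have hdvd : ∀ j ≤ V, p ^ j ∣ k + M ↔ p ^ j ∣ k := fun j hj =>
    Nat.dvd_add_left ((pow_dvd_pow p hj).trans hM)
  apply le_antisymm
  · by_contra! h
    have := (hdvd _ hlt).1 ((padicValNat_dvd_iff_le hkM0).2 h)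
    exact (padicValNat_dvd_iff_le hk0).1 this |>.not_gt (Nat.lt_succ_self _)
  · exact (padicValNat_dvd_iff_le hkM0).1 ((hdvd _ hlt.le).2 pow_padicValNat_dvd)

/-- `|k|_p ^ σ * p ^ (-τ / |k|_p)`. -/
def padicWeight (p : ℕ) (σ τ : ℝ) (k : ℕ) : ℝ :=
  (((p : ℝ) ^ padicValNat p k)⁻¹) ^ σ * (p : ℝ) ^ (-τ * (p : ℝ) ^ padicValNat p k)

theorem padicWeight_nonneg (p : ℕ) (σ τ : ℝ) (k : ℕ) : 0 ≤ padicWeight p σ τ k := by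
  unfold padicWeight; positivity

theorem padicWeight_le_one {p : ℕ} (hp : p ≠ 0) {σ τ : ℝ} (hσ : 0 ≤ σ) (hτ : 0 ≤ τ) (k : ℕ) :
    padicWeight p σ τ k ≤ 1 := by
  have hp1 : (1 : ℝ) ≤ p := by exact_mod_cast Nat.one_le_iff_ne_zero.2 hp
  have hx : (1 : ℝ) ≤ (p : ℝ) ^ padicValNat p k := one_le_pow₀ hp1
  refine mul_le_one₀ ?_ (by positivity) ?_
  · exact Real.rpow_le_one (by positivity) (inv_le_one_of_one_le₀ hx) hσ
  · exact Real.rpow_le_one_of_one_le_of_nonpos hp1 (by nlinarith)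

def truncPadicWeight (V p : ℕ) (σ τ : ℝ) (k : ℕ) : ℝ :=
  if p ^ V ∣ k then 0 else padicWeight p σ τ k

theorem truncPadicWeight_add_of_pow_dvd {V p M : ℕ} [Fact p.Prime] (hM : p ^ V ∣ M)
    (σ τ : ℝ) (k : ℕ) : truncPadicWeight V p σ τ (k + M) = truncPadicWeight V p σ τ k := by
  by_cases hk : p ^ V ∣ k
  · simp [truncPadicWeight, hk, dvd_add hk hM]
  · simp [truncPadicWeight, padicWeight, hk, (Nat.dvd_add_left hM).not.2 hk,
      padicValNat_add_of_not_pow_dvd hk hM]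

section FadSeq

variable (S : Finset ℕ) (r : ℕ → ℝ) (s t : ℕ → ℕ → ℝ)

def fadSeq (k : ℕ) : ℝ := r k * ∏ p ∈ S, padicWeight p (s p k) (t p k) k

def fadSeqTrunc (V k : ℕ) : ℝ := r k * ∏ p ∈ S, truncPadicWeight V p (s p k) (t p k) k

variable {S r s t}

theorem periodic_fadSeqTrunc (hS : ∀ p ∈ S, p.Prime) {V M : ℕ} (hVM : ∀ p ∈ S, p ^ V ∣ M)
    (hr : Periodic (fun k => r (k + 1)) M) (hs : ∀ p ∈ S, Periodic (fun k => s p (k + 1)) M)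
    (ht : ∀ p ∈ S, Periodic (fun k => t p (k + 1)) M) :
    Periodic (fun k => fadSeqTrunc S r s t V (k + 1)) M := fun k => by
  have shift : ∀ f : ℕ → ℝ, Periodic (fun k => f (k + 1)) M → f (k + 1 + M) = f (k + 1) :=
    fun f hf => by rw [add_right_comm]; exact hf k
  simp only [fadSeqTrunc, add_right_comm k M 1, shift r hr]
  refine congrArg (r (k + 1) * ·) (prod_congr rfl fun p hp => ?_)
  have := Fact.mk (hS p hp)
  rw [shift _ (hs p hp), shift _ (ht p hp), truncPadicWeight_add_of_pow_dvd (hVM p hp)]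

theorem abs_fadSeq_sub_fadSeqTrunc_le {B : ℝ} {V k : ℕ} (hS : ∀ p ∈ S, p ≠ 0)
    (hr : |r k| ≤ B) (hs : ∀ p ∈ S, 0 ≤ s p k) (ht : ∀ p ∈ S, 0 ≤ t p k) :
    |fadSeq S r s t k - fadSeqTrunc S r s t V k| ≤ if ∃ p ∈ S, p ^ V ∣ k then B else 0 := by
  split_ifs with hex
  · obtain ⟨p, hp, hpk⟩ := hex
    have htrunc : fadSeqTrunc S r s t V k = 0 :=
      mul_eq_zero_of_right _ (prod_eq_zero hp (if_pos hpk))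
    have hprod : |∏ p ∈ S, padicWeight p (s p k) (t p k) k| ≤ 1 := by
      rw [abs_of_nonneg (prod_nonneg fun p _ => padicWeight_nonneg _ _ _ _)]
      exact prod_le_one (fun p _ => padicWeight_nonneg _ _ _ _)
        fun p hp => padicWeight_le_one (hS p hp) (hs p hp) (ht p hp) k
    rw [htrunc, sub_zero, fadSeq, abs_mul]
    nlinarith [abs_nonneg (r k), abs_nonneg (∏ p ∈ S, padicWeight p (s p k) (t p k) k)]
  · push Not at hex
    have : fadSeq S r s t k = fadSeqTrunc S r s t V k :=
      congrArg (r k * ·) (prod_congr rfl fun p hp => (if_neg (hex p hp)).symm)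
    rw [this, sub_self, abs_zero]

theorem card_filter_exists_pow_dvd_le {S : Finset ℕ} (hS : ∀ p ∈ S, 2 ≤ p) (V X : ℕ) :
    #{k ∈ Icc 1 X | ∃ p ∈ S, p ^ V ∣ k} ≤ #S * (X / 2 ^ V) := by
  classical
  calc #{k ∈ Icc 1 X | ∃ p ∈ S, p ^ V ∣ k}
      ≤ #(S.biUnion fun p => {k ∈ Icc 1 X | p ^ V ∣ k}) := by
        refine card_le_card fun k hk => ?_
        obtain ⟨hkX, p, hp, hpk⟩ := mem_filter.1 hk
        exact mem_biUnion.2 ⟨p, hp, mem_filter.2 ⟨hkX, hpk⟩⟩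
    _ ≤ ∑ p ∈ S, #{k ∈ Icc 1 X | p ^ V ∣ k} := card_biUnion_le
    _ ≤ ∑ _p ∈ S, X / 2 ^ V := sum_le_sum fun p hp => by
        rw [show Icc 1 X = Ioc 0 X from Icc_add_one_left_eq_Ioc 0 X,
          Nat.Ioc_filter_dvd_card_eq_div]
        exact Nat.div_le_div_left (Nat.pow_le_pow_left (hS p hp) V) (by positivity)
    _ = #S * (X / 2 ^ V) := by rw [sum_const, smul_eq_mul]

theorem norm_avg_le_of_norm_le_ite {𝕜 : Type*} [RCLike 𝕜] {u : ℕ → 𝕜} {P : ℕ → Prop}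
    [DecidablePred P] {B : ℝ} {X : ℕ} (hu : ∀ k ∈ Icc 1 X, ‖u k‖ ≤ if P k then B else 0) :
    ‖(∑ k ∈ Icc 1 X, u k) / X‖ ≤ B * #{k ∈ Icc 1 X | P k} / X := by
  rw [norm_div, RCLike.norm_natCast]
  refine div_le_div_of_nonneg_right ((norm_sum_le _ _).trans ((sum_le_sum hu).trans_eq ?_))
    X.cast_nonneg
  rw [sum_ite, sum_const_zero, add_zero, sum_const, nsmul_eq_mul, mul_comm]

theorem dist_avg_fadSeq_fadSeqTrunc_le (hS : ∀ p ∈ S, p.Prime) {B : ℝ} (hB : 0 ≤ B)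
    (hr : ∀ k, 1 ≤ k → |r k| ≤ B) (hs : ∀ p ∈ S, ∀ k, 1 ≤ k → 0 ≤ s p k)
    (ht : ∀ p ∈ S, ∀ k, 1 ≤ k → 0 ≤ t p k) {w : ℂ} (hw : ‖w‖ = 1) (V X : ℕ) :
    dist ((∑ k ∈ Icc 1 X, (fadSeq S r s t k : ℂ) * w ^ k) / X)
      ((∑ k ∈ Icc 1 X, (fadSeqTrunc S r s t V k : ℂ) * w ^ k) / X) ≤ B * #S * (1 / 2) ^ V := by
  classical
  rw [dist_eq_norm, ← sub_div, ← sum_sub_distrib]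
  refine (norm_avg_le_of_norm_le_ite (B := B) (P := fun k => ∃ p ∈ S, p ^ V ∣ k)
    fun k hk => ?_).trans ?_
  · have hk := (mem_Icc.1 hk).1
    rw [← sub_mul, norm_mul, norm_pow, hw, one_pow, mul_one, ← Complex.ofReal_sub,
      Complex.norm_real, Real.norm_eq_abs]
    exact abs_fadSeq_sub_fadSeqTrunc_le (fun p hp => (hS p hp).ne_zero) (hr k hk)
      (fun p hp => hs p hp k hk) (fun p hp => ht p hp k hk)
  · have hcard : (#{k ∈ Icc 1 X | ∃ p ∈ S, p ^ V ∣ k} : ℝ) ≤ #S * (X / 2 ^ V) :=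
      calc (#{k ∈ Icc 1 X | ∃ p ∈ S, p ^ V ∣ k} : ℝ) ≤ (#S * (X / 2 ^ V) : ℕ) := by
            exact_mod_cast card_filter_exists_pow_dvd_le (fun p hp => (hS p hp).two_le) V X
        _ ≤ (#S : ℝ) * ((X : ℝ) / 2 ^ V) := by
            push_cast; gcongr; exact_mod_cast Nat.cast_div_le (α := ℝ)
    refine div_le_of_le_mul₀ X.cast_nonneg (by positivity) ?_
    calc B * #{k ∈ Icc 1 X | ∃ p ∈ S, p ^ V ∣ k} ≤ B * (#S * (X / 2 ^ V)) :=
        mul_le_mul_of_nonneg_left hcard hB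
      _ = B * #S * (1 / 2) ^ V * X := by rw [div_pow, one_pow]; ring

theorem exists_tendsto_avg_fadSeqTrunc (hS : ∀ p ∈ S, p.Prime) {ϖr : ℕ} (hϖr : 0 < ϖr)
    (hrper : ∀ k, 1 ≤ k → r (k + ϖr) = r k) {ϖs ϖt : ℕ → ℕ} (hϖs : ∀ p ∈ S, 0 < ϖs p)
    (hsper : ∀ p ∈ S, ∀ k, 1 ≤ k → s p (k + ϖs p) = s p k) (hϖt : ∀ p ∈ S, 0 < ϖt p)
    (htper : ∀ p ∈ S, ∀ k, 1 ≤ k → t p (k + ϖt p) = t p k) (V : ℕ) (Θ : ℝ) :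
    ∃ ℓ, Tendsto (fun X : ℕ => (∑ k ∈ Icc 1 X,
        (fadSeqTrunc S r s t V k : ℂ) * Complex.exp (Complex.I * Θ) ^ k) / X) atTop (𝓝 ℓ) ∧
      ((¬ ∃ q : ℚ, Θ = 2 * π * q) → ℓ = 0) := by
  set M := ϖr * ∏ p ∈ S, ϖs p * ϖt p * p ^ V
  have hM : M ≠ 0 := mul_ne_zero hϖr.ne' <| prod_ne_zero_iff.2 fun p hp => by
    have := (hS p hp).pos; have := hϖs p hp; have := hϖt p hp; positivity
  have hdvd {p : ℕ} (hp : p ∈ S) : ϖs p * ϖt p * p ^ V ∣ M :=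
    dvd_mul_of_dvd_right (dvd_prod_of_mem _ hp) _
  have hper : Periodic (fun k => fadSeqTrunc S r s t V (k + 1)) M :=
    periodic_fadSeqTrunc hS (fun p hp => (dvd_mul_left _ _).trans (hdvd hp))
      (periodic_succ_of_dvd hrper (dvd_mul_right _ _))
      (fun p hp => periodic_succ_of_dvd (hsper p hp)
        (((dvd_mul_right _ _).mul_right _).trans (hdvd hp)))
      (fun p hp => periodic_succ_of_dvd (htper p hp)
        (((dvd_mul_left _ _).mul_right _).trans (hdvd hp)))
  obtain ⟨ℓ, hℓ, hℓ0⟩ := exists_tendsto_avg_mul_pow_of_periodic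
    (c := fun k => (fadSeqTrunc S r s t V k : ℂ)) hM (hper.comp Complex.ofReal)
    (Complex.norm_exp_I_mul_ofReal Θ)
  exact ⟨ℓ, hℓ, fun hΘ => hℓ0 fun h => hΘ (exists_rat_of_exp_mul_I_pow_eq_one hM h)⟩

end FadSeq

theorem fad_fourier_cesaro_general (S : Finset ℕ) (hS : ∀ p ∈ S, Nat.Prime p)
    (r : ℕ → ℝ)
    (ϖr : ℕ) (hϖr : 0 < ϖr) (hrper : ∀ k, 1 ≤ k → r (k + ϖr) = r k)
    (s t : ℕ → ℕ → ℝ)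
    (hs0 : ∀ p ∈ S, ∀ k, 1 ≤ k → 0 ≤ s p k) (ht0 : ∀ p ∈ S, ∀ k, 1 ≤ k → 0 ≤ t p k)
    (ϖs ϖt : ℕ → ℕ)
    (hϖs : ∀ p ∈ S, 0 < ϖs p ∧ Nat.Coprime (ϖs p) p ∧
      ∀ k, 1 ≤ k → s p (k + ϖs p) = s p k)
    (hϖt : ∀ p ∈ S, 0 < ϖt p ∧ Nat.Coprime (ϖt p) p ∧
      ∀ k, 1 ≤ k → t p (k + ϖt p) = t p k)
    (Θ : ℝ) :
    ∃ L : ℂ,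
      Tendsto (fun X : ℕ =>
        (∑ k ∈ Finset.Icc 1 X,
          (((r k * ∏ p ∈ S, ((((p : ℝ) ^ padicValNat p k)⁻¹) ^ (s p k) *
              (p : ℝ) ^ (-(t p k) * (p : ℝ) ^ padicValNat p k))) : ℝ) : ℂ) *
            Complex.exp (Complex.I * (k : ℂ) * (Θ : ℂ))) / (X : ℂ))
        atTop (𝓝 L) ∧
      ((¬ ∃ q : ℚ, Θ = 2 * Real.pi * (q : ℝ)) → L = 0) := by
  set w := Complex.exp (Complex.I * Θ)
  have hpow (k : ℕ) : Complex.exp (Complex.I * k * Θ) = w ^ k := by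
    rw [← Complex.exp_nat_mul]; ring_nf
  simp_rw [hpow]
  change ∃ L, Tendsto (fun X : ℕ => (∑ k ∈ Icc 1 X, (fadSeq S r s t k : ℂ) * w ^ k) / X)
    atTop (𝓝 L) ∧ _
  set B := ∑ j ∈ range ϖr, ‖r (j + 1)‖
  have hrB (k : ℕ) (hk : 1 ≤ k) : |r k| ≤ B := by
    obtain ⟨j, rfl⟩ := Nat.exists_eq_add_of_le' hk
    exact norm_le_sum_range_of_periodic hϖr.ne' ((periodic_succ_of_dvd hrper dvd_rfl).comp _) j
  choose ℓ hℓ hℓ0 using fun V => exists_tendsto_avg_fadSeqTrunc hS hϖr hrper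
    (fun p hp => (hϖs p hp).1) (fun p hp => (hϖs p hp).2.2)
    (fun p hp => (hϖt p hp).1) (fun p hp => (hϖt p hp).2.2) V Θ
  have hδ : Tendsto (fun V : ℕ => B * #S * (1 / 2 : ℝ) ^ V) atTop (𝓝 0) := by
    simpa using (tendsto_pow_atTop_nhds_zero_of_lt_one (r := (1 / 2 : ℝ)) (by norm_num)
      (by norm_num)).const_mul (B * #S)
  obtain ⟨L, hL, hℓL⟩ := exists_tendsto_of_forall_dist_le hℓ hδ
    (dist_avg_fadSeq_fadSeqTrunc_le hS (by positivity) hrB hs0 ht0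
      (Complex.norm_exp_I_mul_ofReal Θ))
  exact ⟨L, hL, fun hΘ =>
    tendsto_nhds_unique hℓL (tendsto_const_nhds.congr fun V => (hℓ0 V hΘ).symm)⟩

/-- For every `Θ ∈ ℝ`, the Cesàro mean
`L(Θ) = lim (1/X) Σ_{k ≤ X} b̃_k e^{ikΘ}` of the twisted FAD-type sequence
`b̃_k = r_k Π_{p ∈ S} |k|_p^{s_{p,k}} p^{-t_{p,k} |k|_p^{-1}}` exists, and `L(Θ) = 0`
unless `Θ ∈ 2πℚ`. -/
theorem fad_fourier_cesaro (S : Finset ℕ) (hS : ∀ p ∈ S, Nat.Prime p)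
    (r : ℕ → ℝ) (hrpos : ∀ k, 1 ≤ k → 0 < r k)
    (ϖr : ℕ) (hϖr : 0 < ϖr) (hrper : ∀ k, 1 ≤ k → r (k + ϖr) = r k)
    (s t : ℕ → ℕ → ℝ)
    (hs0 : ∀ p ∈ S, ∀ k, 1 ≤ k → 0 ≤ s p k) (ht0 : ∀ p ∈ S, ∀ k, 1 ≤ k → 0 ≤ t p k)
    (ϖs ϖt : ℕ → ℕ)
    (hϖs : ∀ p ∈ S, 0 < ϖs p ∧ Nat.Coprime (ϖs p) p ∧
      ∀ k, 1 ≤ k → s p (k + ϖs p) = s p k)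
    (hϖt : ∀ p ∈ S, 0 < ϖt p ∧ Nat.Coprime (ϖt p) p ∧
      ∀ k, 1 ≤ k → t p (k + ϖt p) = t p k)
    (Θ : ℝ) :
    ∃ L : ℂ,
      Tendsto (fun X : ℕ =>
        (∑ k ∈ Finset.Icc 1 X,
          (((r k * ∏ p ∈ S, ((((p : ℝ) ^ padicValNat p k)⁻¹) ^ (s p k) *
              (p : ℝ) ^ (-(t p k) * (p : ℝ) ^ padicValNat p k))) : ℝ) : ℂ) *
            Complex.exp (Complex.I * (k : ℂ) * (Θ : ℂ))) / (X : ℂ))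
        atTop (𝓝 L) ∧
      ((¬ ∃ q : ℚ, Θ = 2 * Real.pi * (q : ℝ)) → L = 0) :=
  fad_fourier_cesaro_general S hS r ϖr hϖr hrper s t hs0 ht0 ϖs ϖt hϖs hϖt Θ
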